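/- arXiv:1712.02487 — 4 statements merged into one kernel-verified Lean document; each statement's English description precedes it below -/
import Mathlib

section
/- Assume GCH and Chang's conjecture (ℵ_{ω+1}, ℵ_ω) ↠ (ℵ₁, ℵ₀), stated as: for every structure 𝓐 in a countable language with universe of cardinality ℵ_{ω+1} and a distinguished unary predicate of cardinality ℵ_ω, there is an elementary substructure 𝓑 of cardinality ℵ₁ whose intersection with the predicate is countable. Then KH_{ℵ_ω} fails: there is no family 𝓕 ⊆ 𝒫(ℵ_ω) with |𝓕| > ℵ_ω such that |𝓕↾X| ≤ |X| for every infinite X ⊆ ℵ_ω with |X| < ℵ_ω. -/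
/-!
Put a family `F` of `ℵ_{ω+1}` subsets of `S` and `S` itself side by side in one structure, with a
binary operation sending two distinct members of `F` to a point of their symmetric difference.
Chang's conjecture gives a substructure `B` of size `ℵ₁` meeting `S` in a countable set `X`.
Since `B` is closed under the operation, the members of `F` in `B` are separated by points of `X`,
so they have pairwise distinct traces on `X`; by `KH` there are only countably many traces, so `B`
would be countable.
-/

open Cardinal Set FirstOrder Ordinal

def ChangsConjectureAlephOmega : Prop :=
  ∀ (L : FirstOrder.Language.{0, 0}), L.card ≤ ℵ₀ →
    ∀ (M : Type) (_ : L.Structure M) (A : Set M),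
      #M = Cardinal.aleph (ω + 1) → #A = Cardinal.aleph ω →
      ∃ B : L.ElementarySubstructure M,
        #(B : Set M) = Cardinal.aleph 1 ∧ #((B : Set M) ∩ A : Set M) ≤ ℵ₀

namespace FirstOrder.Language

inductive MagmaFunc : ℕ → Type
  | mul : MagmaFunc 2

protected def magma : Language.{0, 0} := ⟨MagmaFunc, fun _ => Empty⟩

instance : Language.magma.IsAlgebraic := fun _ => inferInstanceAs (IsEmpty Empty)

theorem card_magma_le_aleph0 : Language.magma.card ≤ ℵ₀ := by
  have (n : ℕ) : Subsingleton (MagmaFunc n) := ⟨by rintro ⟨⟩ ⟨⟩; rfl⟩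
  have : Countable (Σ n, Language.magma.Functions n) :=
    inferInstanceAs (Countable (Σ n, MagmaFunc n))
  exact mk_le_aleph0

instance magmaStructure (M : Type) [Mul M] : Language.magma.Structure M where
  funMap := fun | .mul, x => x 0 * x 1

theorem Substructure.magma_mul_mem {M : Type} [Mul M] (B : Language.magma.Substructure M)
    {x y : M} (hx : x ∈ B) (hy : y ∈ B) : x * y ∈ B :=
  B.fun_mem MagmaFunc.mul ![x, y] (by simp [Fin.forall_fin_two, hx, hy])

end FirstOrder.Language

open scoped symmDiff

theorem Set.injOn_inter_of_exists_mem_symmDiff {S : Type*} {G : Set (Set S)} {X : Set S}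
    (hG : ∀ t ∈ G, ∀ t' ∈ G, t ≠ t' → ∃ s ∈ X, s ∈ t ∆ t') : InjOn (· ∩ X) G := by
  intro t ht t' ht' htt'
  by_contra hne
  obtain ⟨s, hsX, hs⟩ := hG t ht t' ht' hne
  have h := congrArg (s ∈ ·) htt'
  simp only [mem_inter_iff, hsX, and_true, eq_iff_iff] at h
  rcases mem_symmDiff.mp hs with ⟨hst, hst'⟩ | ⟨hst', hst⟩
  exacts [hst' (h.mp hst), hst (h.mpr hst')]

theorem Set.Countable.of_preimage_inl_of_preimage_inr {α β : Type*} {B : Set (α ⊕ β)}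
    (hl : (Sum.inl ⁻¹' B).Countable) (hr : (Sum.inr ⁻¹' B).Countable) : B.Countable :=
  image_preimage_inl_union_image_preimage_inr B ▸ (hl.image _).union (hr.image _)

section SymmDiffWitness

variable {S : Type} (F : Set (Set S))

noncomputable def symmDiffWitness : F ⊕ S → F ⊕ S → F ⊕ S
  | .inl t, .inl t' =>
    if h : t = t' then .inl t
    else .inr (symmDiff_nonempty.mpr (Subtype.coe_injective.ne h)).some
  | x, _ => x

variable {F}

theorem symmDiffWitness_inl_inl {t t' : F} (h : t ≠ t') :
    ∃ s ∈ (t : Set S) ∆ t', symmDiffWitness F (.inl t) (.inl t') = .inr s :=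
  ⟨_, Set.Nonempty.some_mem _, dif_neg h⟩

theorem mk_preimage_inl_le_mk_image_inter {B : Set (F ⊕ S)}
    (hB : ∀ x ∈ B, ∀ y ∈ B, symmDiffWitness F x y ∈ B) {X : Set S} (hX : Sum.inr ⁻¹' B ⊆ X) :
    #(Sum.inl ⁻¹' B) ≤ #((· ∩ X) '' F) := by
  have hsep : ∀ t ∈ Subtype.val '' (Sum.inl ⁻¹' B), ∀ t' ∈ Subtype.val '' (Sum.inl ⁻¹' B),
      t ≠ t' → ∃ s ∈ X, s ∈ t ∆ t' := by
    rintro _ ⟨t, ht, rfl⟩ _ ⟨t', ht', rfl⟩ hne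
    obtain ⟨s, hs, hw⟩ := symmDiffWitness_inl_inl (Subtype.coe_injective.ne_iff.mp hne)
    exact ⟨s, hX (show Sum.inr s ∈ B from hw ▸ hB _ ht _ ht'), hs⟩
  calc #(Sum.inl ⁻¹' B)
      = #(Subtype.val '' (Sum.inl ⁻¹' B)) := (mk_image_eq Subtype.val_injective).symm
    _ = #((· ∩ X) '' (Subtype.val '' (Sum.inl ⁻¹' B))) :=
      (mk_image_eq_of_injOn _ _ (injOn_inter_of_exists_mem_symmDiff hsep)).symm
    _ ≤ #((· ∩ X) '' F) := mk_le_mk_of_subset (image_mono (Subtype.coe_image_subset _ _))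

end SymmDiffWitness

theorem not_KH_aleph_omega_of_changsConjecture_general
    (hCC : ChangsConjectureAlephOmega) :
    ∀ (S : Type) (_ : #S = Cardinal.aleph ω),
      ¬ ∃ F : Set (Set S), Cardinal.aleph ω < #F ∧
          ∀ X : Set S, ℵ₀ ≤ #X → #X < Cardinal.aleph ω →
            #((fun t => t ∩ X) '' F) ≤ #X := by
  rintro S hS ⟨F, hF, hres⟩
  obtain ⟨G, hGF, hG⟩ := le_mk_iff_exists_subset.mp (Order.succ_le_of_lt hF)
  let _ : Mul (G ⊕ S) := ⟨symmDiffWitness G⟩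
  obtain ⟨B, hB, hBS⟩ := hCC Language.magma Language.card_magma_le_aleph0 (G ⊕ S) inferInstance
    (range Sum.inr) (by simp [hG, hS, succ_aleph, aleph_add_aleph])
    (by rw [mk_range_eq _ Sum.inr_injective, hS])
  have hBr : (Sum.inr ⁻¹' (B : Set (G ⊕ S))).Countable := by
    rw [← preimage_inter_range, ← le_aleph0_iff_set_countable]
    exact (mk_preimage_of_injective _ _ Sum.inr_injective).trans hBS
  have : Infinite S := infinite_iff.mpr (hS ▸ aleph0_le_aleph ω)
  set X := Sum.inr ⁻¹' (B : Set (G ⊕ S)) ∪ range (Infinite.natEmbedding S)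
  have hXc : #X ≤ ℵ₀ := le_aleph0_iff_set_countable.mpr (hBr.union (countable_range _))
  have hXi : ℵ₀ ≤ #X := infinite_iff.mp <| infinite_coe_iff.mpr <|
    (infinite_range_of_injective (Infinite.natEmbedding S).injective).mono subset_union_right
  have hBl : (Sum.inl ⁻¹' (B : Set (G ⊕ S))).Countable := by
    rw [← le_aleph0_iff_set_countable]
    calc #(Sum.inl ⁻¹' (B : Set (G ⊕ S)))
        ≤ #((· ∩ X) '' G) := mk_preimage_inl_le_mk_image_inter
          (fun x hx y hy => B.toSubstructure.magma_mul_mem hx hy) subset_union_left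
      _ ≤ #((· ∩ X) '' F) := mk_le_mk_of_subset (image_mono hGF)
      _ ≤ #X := hres X hXi (hXc.trans_lt (aleph0_lt_aleph.mpr omega0_pos))
      _ ≤ ℵ₀ := hXc
  have hBc := le_aleph0_iff_set_countable.mpr (hBl.of_preimage_inl_of_preimage_inr hBr)
  exact (hB ▸ aleph0_lt_aleph_one).not_ge hBc

/-- Assume GCH and Chang's conjecture `(ℵ_{ω+1}, ℵ_ω) ↠ (ℵ₁, ℵ₀)`.  Then `KH_{ℵ_ω}`
fails: there is no family `𝓕 ⊆ 𝒫(ℵ_ω)` with `|𝓕| > ℵ_ω` and `|𝓕↾X| ≤ |X|` for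
every infinite `X ⊆ ℵ_ω` with `|X| < ℵ_ω`. -/
theorem not_KH_aleph_omega_of_changsConjecture
    (hGCH : ∀ κ : Cardinal.{0}, ℵ₀ ≤ κ → 2 ^ κ = Order.succ κ)
    (hCC : ChangsConjectureAlephOmega) :
    ∀ (S : Type) (_ : #S = Cardinal.aleph ω),
      ¬ ∃ F : Set (Set S), Cardinal.aleph ω < #F ∧
          ∀ X : Set S, ℵ₀ ≤ #X → #X < Cardinal.aleph ω →
            #((fun t => t ∩ X) '' F) ≤ #X :=
  not_KH_aleph_omega_of_changsConjecture_general hCC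
end

section
/- Assume Chang's conjecture (ℵ_{ω+1}, ℵ_ω) ↠ (ℵ₁, ℵ₀). Then there is no family 𝓕 ⊆ [ℵ_ω]^{ℵ₀} (countable subsets of ℵ_ω) with |𝓕| ≥ ℵ_{ω+1} such that 𝓕↾X = {t ∩ X : t ∈ 𝓕} is countable for every countable infinite X ⊆ ℵ_ω. -/
open Cardinal Set FirstOrder Ordinal

/-!
Choose `F₀ ⊆ F` of size `ℵ_{ω+1}` and apply Chang's conjecture to the incidence graph on
`S ⊕ F₀` (a point is adjacent to the sets containing it) with predicate `S`. The elementary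
substructure `B` meets `S` in a countable set, which lies in some countably infinite `X ⊆ S`.
Two distinct sets of `B` differ at some point, hence by elementarity at a point of `B`, i.e. of
`X`; so `t ↦ t ∩ X` is injective on the sets of `B`, whose number is therefore countable by
hypothesis. Thus `B` is countable, contradicting `|B| = ℵ₁`.
-/

namespace FirstOrder.Language

open Structure

theorem ElementarySubstructure.relMap_iff_of_forall_mem {L : Language} {M : Type*}
    [L.Structure M] (B : L.ElementarySubstructure M) (r : L.Relations 2) {x y : M}
    (hx : x ∈ B) (hy : y ∈ B) (h : ∀ a ∈ B, RelMap r ![a, x] ↔ RelMap r ![a, y]) (a : M) :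
    RelMap r ![a, x] ↔ RelMap r ![a, y] := by
  let φ : L.Formula (Fin 2) :=
    ∀' ((r.boundedFormula₂ &0 (Term.var (Sum.inl 0))).iff
      (r.boundedFormula₂ &0 (Term.var (Sum.inl 1))))
  have hB (b : B) : RelMap r ![b, ⟨x, hx⟩] ↔ RelMap r ![b, ⟨y, hy⟩] := by
    rw [← B.subtype.map_rel, ← B.subtype.map_rel, ← FinVec.map_eq, ← FinVec.map_eq]
    exact h b b.2
  have hM := (B.isElementary φ ![⟨x, hx⟩, ⟨y, hy⟩]).mpr
  simp only [φ, Formula.Realize, BoundedFormula.realize_all, BoundedFormula.realize_iff,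
    BoundedFormula.realize_rel₂, Term.realize_var, Function.comp_apply, Sum.elim_inl,
    Sum.elim_inr] at hM
  simpa [Fin.snoc] using hM (fun b => by simpa [Fin.snoc] using hB b) a

end FirstOrder.Language

theorem Set.countable_preimage_inl_and_inr {α β : Type*} {s : Set (α ⊕ β)} :
    (Sum.inl ⁻¹' s).Countable ∧ (Sum.inr ⁻¹' s).Countable ↔ s.Countable :=
  ⟨fun h => image_preimage_inl_union_image_preimage_inr s ▸ (h.1.image _).union (h.2.image _),
    fun h => ⟨h.preimage Sum.inl_injective, h.preimage Sum.inr_injective⟩⟩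

theorem Set.Countable.exists_superset_mk_eq_aleph0 {α : Type*} [Infinite α] {s : Set α}
    (hs : s.Countable) : ∃ X, s ⊆ X ∧ #X = ℵ₀ := by
  let Y := range (_root_.Infinite.natEmbedding α)
  have hY : Y.Infinite := infinite_range_of_injective (_root_.Infinite.natEmbedding α).injective
  have : Countable ↥(s ∪ Y) := (hs.union (countable_range _)).to_subtype
  have : Infinite ↥(s ∪ Y) := (hY.mono subset_union_right).to_subtype
  exact ⟨s ∪ Y, subset_union_left, mk_eq_aleph0 _⟩

section Incidence

variable {S ι : Type*}

def incidenceGraph (f : ι → Set S) : SimpleGraph (S ⊕ ι) :=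
  SimpleGraph.fromRel fun
    | .inl a, .inr i => a ∈ f i
    | _, _ => False

@[simp]
theorem incidenceGraph_adj_inl_inr (f : ι → Set S) (a : S) (i : ι) :
    (incidenceGraph f).Adj (.inl a) (.inr i) ↔ a ∈ f i := by
  simp [incidenceGraph]

@[simp]
theorem incidenceGraph_not_adj_inr_inr (f : ι → Set S) (i j : ι) :
    ¬ (incidenceGraph f).Adj (.inr i) (.inr j) := by
  simp [incidenceGraph]

namespace incidenceGraph

variable {f : ι → Set S}
  (B : @Language.ElementarySubstructure Language.graph (S ⊕ ι) (incidenceGraph f).structure)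

theorem eq_of_inter_eq {X : Set S} (hX : Sum.inl ⁻¹' (B : Set (S ⊕ ι)) ⊆ X) {i j : ι}
    (hi : (.inr i : S ⊕ ι) ∈ B) (hj : (.inr j : S ⊕ ι) ∈ B)
    (h : f i ∩ X = f j ∩ X) : f i = f j := by
  let := (incidenceGraph f).structure
  have hsame (b : S ⊕ ι) (hb : b ∈ B) :
      (incidenceGraph f).Adj b (.inr i) ↔ (incidenceGraph f).Adj b (.inr j) := by
    rcases b with a | k
    · have haX : a ∈ X := hX hb
      simpa [haX] using congrArg (a ∈ ·) h
    · simp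
  ext a
  have hadj :
      (incidenceGraph f).Adj (.inl a) (.inr i) ↔ (incidenceGraph f).Adj (.inl a) (.inr j) :=
    B.relMap_iff_of_forall_mem Language.adj hi hj hsame (.inl a)
  simpa using hadj

theorem countable_preimage_inr (hf : Function.Injective f) {X : Set S}
    (hX : Sum.inl ⁻¹' (B : Set (S ⊕ ι)) ⊆ X)
    (hfX : ((· ∩ X) '' range f).Countable) :
    (Sum.inr ⁻¹' (B : Set (S ⊕ ι))).Countable :=
  MapsTo.countable_of_injOn (f := fun i => f i ∩ X)
    (fun i _ => mem_image_of_mem (· ∩ X) (mem_range_self i))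
    (fun _ hi _ hj h => hf (eq_of_inter_eq B hX hi hj h)) hfX

end incidenceGraph

end Incidence

/-- Assume Chang's conjecture `(ℵ_{ω+1}, ℵ_ω) ↠ (ℵ₁, ℵ₀)`.  Then there is no family
`𝓕 ⊆ [ℵ_ω]^{ℵ₀}` of countably infinite subsets of `ℵ_ω` with `|𝓕| ≥ ℵ_{ω+1}` such
that `𝓕↾X = {t ∩ X : t ∈ 𝓕}` is countable for every countably infinite `X ⊆ ℵ_ω`. -/
theorem no_large_countable_family_of_changsConjecture
    (hCC : ChangsConjectureAlephOmega) :
    ∀ (S : Type) (_ : #S = Cardinal.aleph ω),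
      ¬ ∃ F : Set (Set S),
          (∀ t ∈ F, #t = ℵ₀) ∧
          Cardinal.aleph (ω + 1) ≤ #F ∧
          ∀ X : Set S, #X = ℵ₀ → #((fun t => t ∩ X) '' F) ≤ ℵ₀ := by
  rintro S hS ⟨F, -, hF, hFX⟩
  obtain ⟨F₀, hF₀F, hF₀⟩ := le_mk_iff_exists_subset.mp hF
  let := (incidenceGraph ((↑) : F₀ → Set S)).structure
  have hM : #(S ⊕ F₀) = ℵ_ (ω + 1) := by simp [hS, hF₀]
  have hSM : #(range (Sum.inl : S → S ⊕ F₀)) = ℵ_ ω := by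
    rw [mk_range_eq _ Sum.inl_injective, hS]
  obtain ⟨B, hB, hBA⟩ := hCC Language.graph mk_le_aleph0 _ inferInstance _ hM hSM
  have hBS : (Sum.inl ⁻¹' (B : Set (S ⊕ F₀))).Countable := by
    rw [← preimage_inter_range]
    exact (le_aleph0_iff_set_countable.mp hBA).preimage Sum.inl_injective
  have : Infinite S := infinite_iff.mpr (hS ▸ aleph0_le_aleph ω)
  obtain ⟨X, hBX, hX⟩ := hBS.exists_superset_mk_eq_aleph0
  have hBF := incidenceGraph.countable_preimage_inr B Subtype.val_injective hBX
    ((le_aleph0_iff_set_countable.mp (hFX X hX)).mono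
      (image_mono (Subtype.range_coe.trans_subset hF₀F)))
  have hBc : #B ≤ ℵ₀ := le_aleph0_iff_set_countable.mpr
    (countable_preimage_inl_and_inr.mp ⟨hBS, hBF⟩)
  exact (hB ▸ aleph0_lt_aleph_one).not_ge hBc
end

section
/- Let λ be a singular cardinal of uncountable cofinality κ = cf(λ) such that θ^κ < λ for all cardinals θ < λ. If 𝓕 ⊆ 𝒫(λ) is a family such that the set {α < λ : |𝓕↾α| ≤ |α|} is stationary in λ (as a subset of the ordinal λ), then |𝓕| ≤ λ. -/
/-!
Write `κ = cf λ` and fix a normal map `g` sending `κ` onto `λ`. The stationary set of `λ`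
pulls back along `g` to a stationary set `S ⊆ κ`, and for `i ∈ S` the traces `t ∩ g i`,
`t ∈ 𝓕`, are coded injectively by ordinals `e i t < g i`. Since `g` is continuous, for limit
`i` the code `e i t` lies below some `g j` with `j < i`; a pressing-down argument on `κ` gives
for each `t` one `j` that works for cofinally many `i ∈ S`. Then `t` is determined by `j`
together with the partial function `i ↦ e i t` from `κ` to `g j`, and there are at most
`κ · sup_j (|g j| + 1)^κ ≤ λ` such data.
-/

open Cardinal Set

theorem Set.eq_of_forall_lt_exists_inter_Iio_eq {α : Type*} [LinearOrder α] {t t' : Set α}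
    {a : α} (ht : t ⊆ Iio a) (ht' : t' ⊆ Iio a) (h : ∀ x < a, ∃ y, x < y ∧ t ∩ Iio y = t' ∩ Iio y) :
    t = t' := by
  refine Set.ext fun x => ⟨fun hx => ?_, fun hx => ?_⟩
  · obtain ⟨y, hxy, hy⟩ := h x (ht hx)
    exact (hy ▸ mem_inter hx hxy : x ∈ t' ∩ Iio y).1
  · obtain ⟨y, hxy, hy⟩ := h x (ht' hx)
    exact (hy ▸ mem_inter hx hxy : x ∈ t ∩ Iio y).1

namespace Ordinal

open Order

universe u

/-- Clubs of `o` as sets of ordinals below `o`, in the form of the hypothesis of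
`erdos_hajnal_milner`; Mathlib's `IsClub` lives on the type `Iio o`. -/
def IsClubIn (o : Ordinal.{u}) (C : Set Ordinal.{u}) : Prop :=
  C ⊆ Iio o ∧ (∀ x < o, ∃ c ∈ C, x ≤ c) ∧ ∀ s ⊆ C, s.Nonempty → sSup s < o → sSup s ∈ C

def IsStationaryIn (o : Ordinal.{u}) (S : Set Ordinal.{u}) : Prop :=
  ∀ C, IsClubIn o C → (S ∩ C).Nonempty

theorem isNormal_iSup_Iio_add_one {f : Ordinal.{u} → Ordinal.{u}} (hf : StrictMono f) :
    IsNormal fun a => ⨆ b : Iio a, f b.1 + 1 := by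
  have hle (a : Ordinal.{u}) : ⨆ b : Iio a, f b + 1 ≤ f a :=
    Ordinal.iSup_le fun b => add_one_le_iff.2 (hf b.2)
  have hge {a b : Ordinal.{u}} (h : b < a) : f b + 1 ≤ ⨆ c : Iio a, f c + 1 :=
    Ordinal.le_iSup (fun c : Iio a => f c + 1) ⟨b, h⟩
  refine isNormal_iff.2 ⟨fun a a' h => (hle a).trans_lt ((lt_add_one _).trans_le (hge h)), ?_⟩
  intro o ho x hx
  refine Ordinal.iSup_le fun b => (hge (lt_add_one b.1)).trans (hx _ ?_)
  rw [← succ_eq_add_one]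
  exact ho.succ_lt b.2

theorem exists_isNormal_apply_ord_cof_eq (o : Ordinal.{u}) :
    ∃ g : Ordinal.{u} → Ordinal.{u}, IsNormal g ∧ g o.cof.ord = o := by
  obtain ⟨f, hf⟩ := exists_isFundamentalSeq (o := o) rfl
  let f' (b : Ordinal.{u}) : Ordinal.{u} := if h : b < o.cof.ord then f ⟨b, h⟩ else o + b
  have hf' : StrictMono f' := by
    intro a b hab
    by_cases hb : b < o.cof.ord
    · simp only [f', dif_pos hb, dif_pos (hab.trans hb)]
      exact hf.strictMono hab
    by_cases ha : a < o.cof.ord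
    · simp only [f', dif_pos ha, dif_neg hb]
      exact (f _).2.trans_le le_self_add
    · simp only [f', dif_neg ha, dif_neg hb]
      exact add_lt_add_right hab o
  refine ⟨_, isNormal_iSup_Iio_add_one hf', ?_⟩
  refine (iSup_congr fun b : Iio o.cof.ord => ?_).trans hf.iSup_add_one_eq
  simp only [f', dif_pos (mem_Iio.1 b.2)]

theorem IsStationaryIn.preimage_of_isNormal {o c : Ordinal.{u}} {S : Set Ordinal.{u}}
    (hS : IsStationaryIn o S) {g : Ordinal.{u} → Ordinal.{u}} (hg : IsNormal g)
    (hc : IsSuccLimit c) (hgc : g c = o) : IsStationaryIn c (g ⁻¹' S) := by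
  subst hgc
  rintro C ⟨hCc, hCcof, hCsup⟩
  suffices IsClubIn (g c) (g '' C) by
    obtain ⟨_, hS, i, hi, rfl⟩ := hS _ this
    exact ⟨i, hS, hi⟩
  refine ⟨image_subset_iff.2 fun i hi => hg.strictMono (hCc hi), fun x hx => ?_,
    fun s hs hne hsup => ?_⟩
  · obtain ⟨a, ha, hxa⟩ := (hg.lt_iff_exists_lt hc).1 hx
    obtain ⟨i, hi, hai⟩ := hCcof a ha
    exact ⟨g i, mem_image_of_mem g hi, hxa.le.trans (hg.monotone hai)⟩
  · have hts : g '' (C ∩ g ⁻¹' s) = s := by rw [image_inter_preimage, inter_eq_right.2 hs]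
    have hne' : (C ∩ g ⁻¹' s).Nonempty := (hts ▸ hne).of_image
    have hgt : g (sSup (C ∩ g ⁻¹' s)) = sSup s := by
      rw [hg.map_sSup hne' ⟨c, fun i hi => (hCc hi.1).le⟩, hts]
    refine ⟨_, hCsup _ inter_subset_left hne' ?_, hgt⟩
    rw [← hg.strictMono.lt_iff_lt, hgt]
    exact hsup

theorem isClubIn_setOf_isSuccLimit_forall_lt {κ : Cardinal.{u}} (hκ : κ.IsRegular)
    (hκ₀ : ℵ₀ < κ) {b : Ordinal.{u} → Ordinal.{u}} (hb : ∀ j < κ.ord, b j < κ.ord) :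
    IsClubIn κ.ord {i | i < κ.ord ∧ IsSuccLimit i ∧ ∀ j < i, b j < i} := by
  refine ⟨fun i hi => hi.1, fun x hx => ?_, fun s hs hne hsup => ?_⟩
  · let h (i : Ordinal.{u}) : Ordinal.{u} := max (i + 1) (⨆ j : Iio i, b j + 1)
    have hh : ∀ i < κ.ord, h i < κ.ord := by
      intro i hi
      refine max_lt ?_ (lift_iSup_add_one_lt_of_lt_cof ?_ fun j => hb _ (j.2.trans hi))
      · rw [← succ_eq_add_one]
        exact (isSuccLimit_ord hκ.aleph0_le).succ_lt hi
      · rw [Cardinal.mk_Iio_ordinal, Cardinal.lift_lift, ← lift_cof, hκ.cof_ord]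
        exact Cardinal.lift_lt.2 (lt_ord.1 hi)
    -- `nfp h x = ⨆ n, h^[n] x` is a limit closed under `b`: `h i` exceeds `i` and `b j`, `j < i`
    have key : ∀ y < nfp h x, ∃ z, y < z ∧ h z ≤ nfp h x := fun y hy =>
      let ⟨n, hn⟩ := lt_nfp_iff.1 hy
      ⟨_, hn, by simpa only [Function.iterate_succ_apply'] using iterate_le_nfp h x (n + 1)⟩
    refine ⟨nfp h x, ⟨nfp_lt_ord (by rwa [hκ.cof_ord]) hh hx, ?_, fun j hj => ?_⟩, le_nfp h x⟩
    · refine isSuccLimit_iff.2 ⟨?_, isSuccPrelimit_of_succ_lt fun y hy => ?_⟩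
      · have : x + 1 ≤ nfp h x := (le_max_left _ _).trans (iterate_le_nfp h x 1)
        exact ((lt_add_one x).trans_le this).ne_bot
      · obtain ⟨z, hyz, hz⟩ := key y hy
        rw [succ_eq_add_one]
        exact (add_one_le_iff.2 hyz).trans_lt
          ((lt_add_one z).trans_le ((le_max_left _ _).trans hz))
    · obtain ⟨z, hjz, hz⟩ := key j hj
      exact (lt_add_one _).trans_le <| (Ordinal.le_iSup (fun k : Iio z => b k + 1) ⟨j, hjz⟩).trans
        ((le_max_right _ _).trans hz)
  · have hbdd : BddAbove s := ⟨κ.ord, fun i hi => (hs hi).1.le⟩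
    refine ⟨hsup, ?_, fun j hj => ?_⟩
    · by_cases hmem : sSup s ∈ s
      · exact (hs hmem).2.1
      · exact (isLUB_csSup hne hbdd).isSuccLimit_of_notMem hne hmem
    · obtain ⟨i, hi, hji⟩ := (lt_csSup_iff hbdd hne).1 hj
      exact ((hs hi).2.2 j hji).trans_le (le_csSup hbdd hi)

theorem IsStationaryIn.exists_frequently_of_regressive {κ : Cardinal.{u}} (hκ : κ.IsRegular)
    (hκ₀ : ℵ₀ < κ) {S : Set Ordinal.{u}} (hS : IsStationaryIn κ.ord S)
    {P : Ordinal.{u} → Ordinal.{u} → Prop} (hP : ∀ i ∈ S, IsSuccLimit i → ∃ j < i, P i j) :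
    ∃ j < κ.ord, ∀ x < κ.ord, ∃ i ∈ S ∩ Ico x κ.ord, P i j := by
  by_contra! h
  choose! b hb hbP using h
  obtain ⟨i, hiS, hi, hlim, hbi⟩ := hS _ (isClubIn_setOf_isSuccLimit_forall_lt hκ hκ₀ hb)
  obtain ⟨j, hji, hPij⟩ := hP i hiS hlim
  exact hbP j (hji.trans hi) i ⟨hiS, (hbi j hji).le, hi⟩ hPij

theorem mk_le_mul_of_isStationaryIn {κ μ : Cardinal.{u}} (hκ : κ.IsRegular) (hκ₀ : ℵ₀ < κ)
    {g : Ordinal.{u} → Ordinal.{u}} (hg : IsNormal g) {F : Set (Set Ordinal.{u})}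
    (hF : ∀ t ∈ F, t ⊆ Iio (g κ.ord))
    (hS : IsStationaryIn κ.ord {i | #((· ∩ Iio (g i)) '' F) ≤ Cardinal.lift.{u + 1} (g i).card})
    (hμ : ∀ j < κ.ord, ((g j).card + 1) ^ κ ≤ μ) :
    #F ≤ Cardinal.lift.{u + 1} (κ * μ) := by
  set S := {i | #((· ∩ Iio (g i)) '' F) ≤ Cardinal.lift.{u + 1} (g i).card}
  have he_exists : ∀ i ∈ S, ∃ e : F → Ordinal.{u}, (∀ t, e t < g i) ∧
      ∀ t t', e t = e t' → t.1 ∩ Iio (g i) = t'.1 ∩ Iio (g i) := by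
    intro i hi
    obtain ⟨emb⟩ := Cardinal.le_def _ _ |>.1 (hi.trans_eq (Cardinal.mk_Iio_ordinal _).symm)
    exact ⟨fun t => emb ⟨_, mem_image_of_mem _ t.2⟩, fun t => (emb _).2,
      fun t t' h => congrArg Subtype.val (emb.injective (Subtype.ext h))⟩
  choose! e he_lt he using he_exists
  have hJ (t : F) : ∃ j : Iio κ.ord, ∀ x < κ.ord, ∃ i ∈ S ∩ Ico x κ.ord, e i t < g j := by
    obtain ⟨j, hj, hJ⟩ := hS.exists_frequently_of_regressive hκ hκ₀ fun i hiS hi =>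
      (hg.lt_iff_exists_lt hi).1 (he_lt i hiS t)
    exact ⟨⟨j, hj⟩, hJ⟩
  choose J hJ using hJ
  let code (j : Iio κ.ord) (t : F) (i : Iio κ.ord) : Option (Iio (g j)) :=
    if h : i.1 ∈ S ∧ e i t < g j then some ⟨e i t, h.2⟩ else none
  have hcode_inj (j : Iio κ.ord) : Function.Injective fun t : J ⁻¹' {j} => code j t := by
    rintro ⟨t, rfl : J t = j⟩ ⟨t', _⟩ heq
    refine Subtype.ext <| Subtype.ext <|
      eq_of_forall_lt_exists_inter_Iio_eq (hF _ t.2) (hF _ t'.2) fun x hx => ?_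
    obtain ⟨i₀, hi₀, hxi₀⟩ := (hg.lt_iff_exists_lt (isSuccLimit_ord hκ.aleph0_le)).1 hx
    obtain ⟨i, ⟨hiS, hi₀i, hi⟩, hit⟩ := hJ t i₀ hi₀
    have hcodei := congrFun heq ⟨i, hi⟩
    simp only [code, dif_pos (And.intro hiS hit)] at hcodei
    split_ifs at hcodei
    exact ⟨g i, hxi₀.trans_le (hg.monotone hi₀i),
      he i hiS t t' (congrArg Subtype.val (Option.some_injective _ hcodei))⟩
  calc #F ≤ #(Iio κ.ord) * Cardinal.lift.{u + 1} μ := by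
        refine mk_le_mk_mul_of_mk_preimage_le J fun j =>
          (mk_le_of_injective (hcode_inj j)).trans ?_
        rw [← Cardinal.power_def, Cardinal.mk_option, Cardinal.mk_Iio_ordinal,
          Cardinal.mk_Iio_ordinal, card_ord]
        simpa using Cardinal.lift_le.{u + 1}.2 (hμ j j.2)
    _ = Cardinal.lift.{u + 1} (κ * μ) := by
        rw [Cardinal.mk_Iio_ordinal, card_ord, Cardinal.lift_mul]

end Ordinal

theorem erdos_hajnal_milner_general (l : Cardinal.{0})
    (hcof : ℵ₀ < l.ord.cof)
    (hpow : ∀ θ : Cardinal.{0}, θ < l → θ ^ l.ord.cof < l)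
    (F : Set (Set Ordinal.{0}))
    (hsub : ∀ t ∈ F, t ⊆ Set.Iio l.ord)
    (hstat : ∀ C : Set Ordinal.{0}, C ⊆ Set.Iio l.ord →
        (∀ o < l.ord, ∃ c ∈ C, o ≤ c) →
        (∀ s ⊆ C, s.Nonempty → sSup s < l.ord → sSup s ∈ C) →
        ∃ α ∈ C, #((fun t => t ∩ Set.Iio α) '' F) ≤ Cardinal.lift.{1} α.card) :
    #F ≤ Cardinal.lift.{1} l := by
  have hl : ℵ₀ < l := hcof.trans_le (Ordinal.cof_ord_le l)
  obtain ⟨g, hg, hgl⟩ := Ordinal.exists_isNormal_apply_ord_cof_eq l.ord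
  have hS : Ordinal.IsStationaryIn l.ord {α | #((· ∩ Iio α) '' F) ≤ Cardinal.lift.{1} α.card} :=
    fun C ⟨hCl, hCcof, hCsup⟩ => let ⟨α, hαC, hα⟩ := hstat C hCl hCcof hCsup; ⟨α, hα, hαC⟩
  have hμ (j : Ordinal) (hj : j < l.ord.cof.ord) : ((g j).card + 1) ^ l.ord.cof ≤ l :=
    (hpow _ (add_lt_of_lt hl.le (lt_ord.1 (hgl ▸ hg.strictMono hj)) (one_lt_aleph0.trans hl))).le
  calc #F ≤ Cardinal.lift.{1} (l.ord.cof * l) :=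
        Ordinal.mk_le_mul_of_isStationaryIn (isRegular_cof (isSuccLimit_ord hl.le)) hcof hg
          (fun t ht => hgl.symm ▸ hsub t ht)
          (hS.preimage_of_isNormal hg (isSuccLimit_ord hcof.le) hgl) hμ
    _ = Cardinal.lift.{1} l := by rw [mul_eq_right hl.le (Ordinal.cof_ord_le l) hcof.ne_bot]

/-- The Erdős–Hajnal–Milner theorem: let `λ` be a singular cardinal of uncountable
cofinality `κ = cf(λ)` with `θ^κ < λ` for all `θ < λ`.  If `𝓕 ⊆ 𝒫(λ)` is such that
`{α < λ : |𝓕↾α| ≤ |α|}` is stationary in `λ` (it meets every closed unbounded subset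
of `λ`), then `|𝓕| ≤ λ`.  Subsets of `λ` are realized as sets of ordinals `< l.ord`. -/
theorem erdos_hajnal_milner (l : Cardinal.{0})
    (hsing : l.ord.cof < l) (hcof : ℵ₀ < l.ord.cof)
    (hpow : ∀ θ : Cardinal.{0}, θ < l → θ ^ l.ord.cof < l)
    (F : Set (Set Ordinal.{0}))
    (hsub : ∀ t ∈ F, t ⊆ Set.Iio l.ord)
    (hstat : ∀ C : Set Ordinal.{0}, C ⊆ Set.Iio l.ord →
        (∀ o < l.ord, ∃ c ∈ C, o ≤ c) →
        (∀ s ⊆ C, s.Nonempty → sSup s < l.ord → sSup s ∈ C) →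
        ∃ α ∈ C, #((fun t => t ∩ Set.Iio α) '' F) ≤ Cardinal.lift.{1} α.card) :
    #F ≤ Cardinal.lift.{1} l :=
  erdos_hajnal_milner_general l hcof hpow F hsub hstat
end

section
/- Let κ be a supercompact cardinal and λ ≥ κ. Then KH_λ fails: for every family 𝓕 ⊆ 𝒫(λ) with |𝓕| ≥ λ⁺, the set {x ∈ P_κ(λ) : |𝓕↾x| ≥ |x|⁺} belongs to every normal fine ultrafilter on P_κ(λ) derived from a λ⁺-supercompactness embedding; in particular there exists an infinite x ⊆ λ with |x| < λ and |𝓕↾x| > |x|. -/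
open Cardinal Set

/-- `P_κ(A)`: the subsets of `A` of cardinality `< κ`. -/
def Pk (κ : Cardinal.{0}) (A : Type) : Type := {x : Set A // #x < κ}

/-- `U` is a `κ`-complete normal fine ultrafilter on `P_κ(A)`. -/
def IsNormalFineMeasure (κ : Cardinal.{0}) (A : Type)
    (U : Set (Set (Pk κ A))) : Prop :=
  (∅ ∉ U) ∧ (Set.univ ∈ U) ∧
  (∀ X Y : Set (Pk κ A), X ∈ U → X ⊆ Y → Y ∈ U) ∧
  (∀ X Y : Set (Pk κ A), X ∈ U → Y ∈ U → X ∩ Y ∈ U) ∧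
  (∀ X : Set (Pk κ A), X ∈ U ∨ Xᶜ ∈ U) ∧
  (∀ (ι : Type) (X : ι → Set (Pk κ A)), #ι < κ → (∀ i, X i ∈ U) → (⋂ i, X i) ∈ U) ∧
  (∀ a : A, {x : Pk κ A | a ∈ x.1} ∈ U) ∧
  (∀ X : A → Set (Pk κ A), (∀ a, X a ∈ U) →
    {x : Pk κ A | ∀ a ∈ x.1, x ∈ X a} ∈ U)

/-- `κ` is supercompact: for every set of cardinality `≥ κ` there is a `κ`-complete
normal fine ultrafilter on `P_κ` of it. -/
def IsSupercompact (κ : Cardinal.{0}) : Prop :=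
  ∀ A : Type, κ ≤ #A → ∃ U : Set (Set (Pk κ A)), IsNormalFineMeasure κ A U

/-! The set `x = y ∩ S` of a typical `y ∈ P_κ(λ⁺)` satisfies `|x| < |y|`: otherwise pressing down
injections `y → y ∩ S` would inject `λ⁺` into `S`. Fix an injection `b ↦ F_b` of `λ⁺` into `𝓕`.
By normality, a typical `y` contains, for all distinct `b, b' ∈ y`, a point of `S` separating
`F_b` from `F_b'`; so `b ↦ F_b ∩ x` is injective on `y`, and `|𝓕↾x| ≥ |y| > |x|`. -/

lemma Set.exists_mapsTo_injOn_of_mk_le {α : Type*} {s t : Set α} (h : #s ≤ #t) :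
    ∃ f : α → α, MapsTo f s t ∧ InjOn f s := by
  classical
  obtain ⟨e⟩ := h
  refine ⟨fun a => if ha : a ∈ s then e ⟨a, ha⟩ else a, fun a ha => by simp [ha],
    fun a ha b hb hab => ?_⟩
  simp only [ha, hb, dite_true] at hab
  exact congrArg Subtype.val (e.injective (Subtype.ext hab))

lemma Cardinal.mk_preimage_val {α : Type*} (T s : Set α) :
    #(((↑) : T → α) ⁻¹' s) = #↥(T ∩ s) := by
  rw [← Subtype.image_preimage_coe, mk_image_eq Subtype.val_injective]

namespace IsNormalFineMeasure

variable {κ : Cardinal.{0}} {A : Type} {U : Set (Set (Pk κ A))} (hU : IsNormalFineMeasure κ A U)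

def toUltrafilter : Ultrafilter (Pk κ A) :=
  .ofComplNotMemIff
    { sets := U
      univ_sets := hU.2.1
      sets_of_superset := hU.2.2.1 _ _
      inter_sets := hU.2.2.2.1 _ _ }
    fun X => ⟨fun hX => (hU.2.2.2.2.1 X).resolve_right hX,
      fun hX hXc => hU.1 (by simpa using hU.2.2.2.1 _ _ hX hXc)⟩

lemma eventually_mem (a : A) : ∀ᶠ y : Pk κ A in hU.toUltrafilter, a ∈ y.1 :=
  hU.2.2.2.2.2.2.1 a

lemma eventually_forall_of_mk_lt {ι : Type} (hι : #ι < κ) {P : ι → Pk κ A → Prop}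
    (h : ∀ i, ∀ᶠ y in hU.toUltrafilter, P i y) : ∀ᶠ y in hU.toUltrafilter, ∀ i, P i y := by
  simp only [Filter.Eventually, ofPred_forall]
  exact hU.2.2.2.2.2.1 ι _ hι h

lemma eventually_forall_mem {P : A → Pk κ A → Prop} (h : ∀ a, ∀ᶠ y in hU.toUltrafilter, P a y) :
    ∀ᶠ y in hU.toUltrafilter, ∀ a ∈ y.1, P a y :=
  hU.2.2.2.2.2.2.2 _ h

lemma exists_eventually_eq_of_eventually_mem {g : Pk κ A → A}
    (hg : ∀ᶠ y in hU.toUltrafilter, g y ∈ y.1) : ∃ a, ∀ᶠ y in hU.toUltrafilter, g y = a := by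
  by_contra! h
  have hne : ∀ᶠ y in hU.toUltrafilter, ∀ a ∈ y.1, g y ≠ a := hU.eventually_forall_mem h
  obtain ⟨y, hgy, hy⟩ := (hg.and hne).exists
  exact hy _ hgy rfl

lemma mk_le_of_eventually_mk_le_inter {T : Set A}
    (h : ∀ᶠ y : Pk κ A in hU.toUltrafilter, #y.1 ≤ #↥(y.1 ∩ T)) : #A ≤ #T := by
  have hf : ∀ y : Pk κ A, ∃ f : A → A,
      #y.1 ≤ #↥(y.1 ∩ T) → MapsTo f y.1 (y.1 ∩ T) ∧ InjOn f y.1 := by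
    intro y
    by_cases hy : #y.1 ≤ #↥(y.1 ∩ T)
    · obtain ⟨f, hf⟩ := exists_mapsTo_injOn_of_mk_le hy
      exact ⟨f, fun _ => hf⟩
    · exact ⟨id, fun h => absurd h hy⟩
  choose f hf using hf
  replace h : ∀ᶠ y : Pk κ A in hU.toUltrafilter, MapsTo (f y) y.1 (y.1 ∩ T) ∧ InjOn (f y) y.1 :=
    h.mono fun y => hf y
  have hc : ∀ a, ∃ c, ∀ᶠ y in hU.toUltrafilter, f y a = c := fun a =>
    hU.exists_eventually_eq_of_eventually_mem <|
      (h.and (hU.eventually_mem a)).mono fun y hy => (hy.1.1 hy.2).1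
  choose c hc using hc
  have hcT : ∀ a, c a ∈ T := fun a => by
    obtain ⟨y, hy, ha, hfa⟩ := (h.and ((hU.eventually_mem a).and (hc a))).exists
    exact hfa ▸ (hy.1 ha).2
  have hc_inj : Function.Injective c := fun a b hab => by
    obtain ⟨y, hy, ha, hb, hfa, hfb⟩ :=
      (h.and ((hU.eventually_mem a).and ((hU.eventually_mem b).and ((hc a).and (hc b))))).exists
    exact hy.2 ha hb (hfa.trans (hab.trans hfb.symm))
  exact mk_le_of_injective (f := fun a => (⟨c a, hcT a⟩ : T))
    fun a b hab => hc_inj (congrArg Subtype.val hab)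

lemma eventually_mk_preimage_val_lt {T : Set A} (hT : #T < #A) :
    ∀ᶠ y : Pk κ A in hU.toUltrafilter, #(((↑) : T → A) ⁻¹' y.1) < #y.1 := by
  refine (hU.toUltrafilter.em _).resolve_right fun h =>
    hT.not_ge (hU.mk_le_of_eventually_mk_le_inter (h.mono fun y hy => ?_))
  rw [inter_comm, ← mk_preimage_val]
  exact not_lt.mp hy

lemma eventually_mk_le_mk_image_inter {S : Set A} {F : Set (Set S)} (hF : #A ≤ #F) :
    ∀ᶠ y : Pk κ A in hU.toUltrafilter,
      #y.1 ≤ #((fun t => t ∩ ((↑) : S → A) ⁻¹' y.1) '' F) := by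
  obtain ⟨e⟩ := hF
  have hsep : ∀ a b : A, ∀ᶠ y : Pk κ A in hU.toUltrafilter,
      a ≠ b → ∃ s : S, (s : A) ∈ y.1 ∧ ¬(s ∈ (e a : Set S) ↔ s ∈ (e b : Set S)) := by
    intro a b
    by_cases hab : a = b
    · exact .of_forall fun _ h => absurd hab h
    obtain ⟨s, hs⟩ : ∃ s : S, ¬(s ∈ (e a : Set S) ↔ s ∈ (e b : Set S)) :=
      not_forall.mp fun h => hab (e.injective (Subtype.ext (Set.ext h)))
    exact (hU.eventually_mem s).mono fun y hy _ => ⟨s, hy, hs⟩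
  filter_upwards [hU.eventually_forall_mem fun a => hU.eventually_forall_mem (hsep a)] with y hy
  have hinj : InjOn (fun a => (e a : Set S) ∩ ((↑) : S → A) ⁻¹' y.1) y.1 := by
    intro a ha b hb hab
    by_contra hne
    obtain ⟨s, hsy, hs⟩ := hy a ha b hb hne
    have := congrArg (s ∈ ·) hab
    simp only [mem_inter_iff, mem_preimage, hsy, and_true, eq_iff_iff] at this
    exact hs this
  calc #y.1 = #((fun a => (e a : Set S) ∩ ((↑) : S → A) ⁻¹' y.1) '' y.1) :=
        (mk_image_eq_of_injOn _ _ hinj).symm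
    _ ≤ _ := mk_le_mk_of_subset (image_subset_iff.mpr fun a _ => mem_image_of_mem _ (e a).2)

end IsNormalFineMeasure

/-- If `κ` is supercompact and `λ ≥ κ`, then `KH_λ` fails.  Here `B` has size `λ⁺`
and `S ⊆ B` has size `λ`; for every family `𝓕 ⊆ 𝒫(S)` with `|𝓕| ≥ λ⁺`, the set
`{x ∈ P_κ(λ) : |𝓕↾x| ≥ |x|⁺}` belongs to every ultrafilter on `P_κ(λ)` derived (by
projection `y ↦ y ∩ S`) from a normal fine ultrafilter witnessing
`λ⁺`-supercompactness; in particular there is an infinite `x ⊆ S` with `|x| < λ` and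
`|𝓕↾x| > |x|`. -/
theorem not_KH_above_supercompact (κ : Cardinal.{0}) (hκ₀ : ℵ₀ < κ)
    (hκ : IsSupercompact κ) (l : Cardinal.{0}) (hl : κ ≤ l)
    (B : Type) (hB : #B = Order.succ l) (S : Set B) (hS : #S = l)
    (F : Set (Set S)) (hF : Order.succ l ≤ #F) :
    (∀ U : Set (Set (Pk κ B)), IsNormalFineMeasure κ B U →
      {y : Pk κ B | Order.succ (#{s : S | (s : B) ∈ y.1}) ≤
          #((fun t => t ∩ {s : S | (s : B) ∈ y.1}) '' F)} ∈ U) ∧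
    ∃ x : Set S, ℵ₀ ≤ #x ∧ #x < l ∧ #x < #((fun t => t ∩ x) '' F) := by
  have hSB : #S < #B := hS ▸ hB ▸ Order.lt_succ l
  have hFB : #B ≤ #F := hB ▸ hF
  have hmeasure : ∀ U : Set (Set (Pk κ B)), (hU : IsNormalFineMeasure κ B U) →
      ∀ᶠ y : Pk κ B in hU.toUltrafilter, Order.succ (#{s : S | (s : B) ∈ y.1}) ≤
          #((fun t => t ∩ {s : S | (s : B) ∈ y.1}) '' F) := fun U hU =>
    ((hU.eventually_mk_preimage_val_lt hSB).and (hU.eventually_mk_le_mk_image_inter hFB)).mono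
      fun y hy => (Order.succ_le_of_lt hy.1).trans hy.2
  refine ⟨hmeasure, ?_⟩
  obtain ⟨U, hU⟩ := hκ B (hB ▸ hl.trans (Order.le_succ l))
  obtain ⟨D, hD⟩ := le_mk_iff_exists_set.mp (hS ▸ hκ₀.le.trans hl : ℵ₀ ≤ #S)
  have hDy : ∀ᶠ y : Pk κ B in hU.toUltrafilter, ∀ d : D, ((d : S) : B) ∈ y.1 :=
    hU.eventually_forall_of_mk_lt (hD ▸ hκ₀) fun d => hU.eventually_mem _
  obtain ⟨y, hy, hDsub⟩ := ((hmeasure U hU).and hDy).exists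
  refine ⟨_, hD ▸ mk_le_mk_of_subset fun d hd => hDsub ⟨d, hd⟩, ?_, (Order.lt_succ _).trans_le hy⟩
  calc #{s : S | (s : B) ∈ y.1} ≤ #y.1 := mk_preimage_of_injective _ _ Subtype.val_injective
    _ < κ := y.2
    _ ≤ l := hl
end
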